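/- arXiv:1701.00700 — 8 statements merged into one kernel-verified Lean document; each statement's English description precedes it below -/
import Mathlib

section
/- Let S = {(x,y) ∈ ℝ² : ⌊y⌋ even} and v = (0,1). Then the set T = S Δ (S + (2/3)v) satisfies T ⊕₂ {0, (1/3)v, (2/3)v} = ∅; that is, every point of the plane is covered an even number of times by the three translates T, T + (0,1/3), T + (0,2/3). -/
open scoped Classical symmDiff

/-- The Minkowski sum modulo 2 of a set `X ⊆ ℝ²` with a finite set `K`. -/
noncomputable def oddMink (X : Set (ℝ × ℝ)) (K : Finset (ℝ × ℝ)) : Set (ℝ × ℝ) :=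
  {a | Odd ((K.filter (fun z => a - z ∈ X)).card)}

/-- The standard horizontal stripe pattern. -/
def stripeS : Set (ℝ × ℝ) := {p | Even ⌊p.2⌋}

/-!
Count modulo 2 with the indicator `χ_X : ℝ² → ZMod 2`. Writing `w = (0, 1/3)`, the indicator of
`T = S ∆ (S + 2w)` is `χ_S(a) + χ_S(a - 2w)`, so summing it over the shifts `a, a - w, a - 2w`
the term `χ_S(a - 2w)` occurs twice and cancels, leaving the count of `a` in
`(S ∆ (S + 3w)) ⊕₂ {0, w}`. Since `3w = (0, 1)` and shifting by one unit swaps the even and odd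
stripes, `S ∆ (S + 3w)` is the whole plane, so every point is counted `1 + 1 = 0` times.
-/

lemma mem_oddMink_iff {X : Set (ℝ × ℝ)} {K : Finset (ℝ × ℝ)} {a : ℝ × ℝ} :
    a ∈ oddMink X K ↔ ∑ z ∈ K, X.indicator (1 : ℝ × ℝ → ZMod 2) (a - z) = 1 := by
  simp only [oddMink, Set.mem_ofPred_eq, ← ZMod.natCast_eq_one_iff_odd,
    Finset.natCast_card_filter, Set.indicator_apply, Pi.one_apply]

lemma indicator_symmDiff_apply_zmod_two {α : Type*} (s t : Set α) (a : α) :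
    (s ∆ t).indicator (1 : α → ZMod 2) a = s.indicator 1 a + t.indicator 1 a := by
  by_cases hs : a ∈ s <;> by_cases ht : a ∈ t <;>
    simp [Set.mem_symmDiff, hs, ht, CharTwo.add_self_eq_zero]

lemma indicator_one_image_add_right_apply {G M : Type*} [AddGroup G] [Zero M] [One M]
    (X : Set G) (v a : G) : ((· + v) '' X).indicator (1 : G → M) a = X.indicator 1 (a - v) := by
  simp [Set.indicator_apply, Set.image_add_right, sub_eq_add_neg]

lemma oddMink_symmDiff_shift_two_eq {w : ℝ × ℝ} (hw : w ≠ 0) (X : Set (ℝ × ℝ)) :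
    oddMink (X ∆ ((· + (w + w)) '' X)) {0, w, w + w} =
      oddMink (X ∆ ((· + (w + w + w)) '' X)) {0, w} := by
  have hww : w + w ≠ 0 := by rw [← two_smul ℝ w]; exact smul_ne_zero two_ne_zero hw
  ext a
  rw [mem_oddMink_iff, mem_oddMink_iff, Finset.sum_insert (by simp [hw.symm, hww.symm]),
    Finset.sum_pair (by simpa using hw), Finset.sum_pair hw.symm]
  simp only [indicator_symmDiff_apply_zmod_two, indicator_one_image_add_right_apply, sub_zero,
    sub_sub]
  abel_nf
  refine Iff.of_eq (congrArg (· = 1) ?_)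
  linear_combination CharTwo.add_self_eq_zero (X.indicator (1 : ℝ × ℝ → ZMod 2) (a + -2 • w))

lemma stripeS_symmDiff_shift_one :
    stripeS ∆ ((· + ((0 : ℝ), (1 : ℝ))) '' stripeS) = Set.univ := by
  refine Set.eq_univ_of_forall fun p => ?_
  have shift_swaps : p ∈ (· + ((0 : ℝ), (1 : ℝ))) '' stripeS ↔ p ∉ stripeS := by
    simp [Set.image_add_right, stripeS, ← sub_eq_add_neg]
  rw [Set.mem_symmDiff, shift_swaps]
  tauto

lemma oddMink_univ_pair {w : ℝ × ℝ} (hw : w ≠ 0) : oddMink Set.univ {0, w} = ∅ := by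
  ext a
  simp [mem_oddMink_iff, Finset.sum_pair hw.symm]

theorem stripe_two_thirds_cancel :
    oddMink (stripeS ∆ ((fun p => p + ((0 : ℝ), (2 / 3 : ℝ))) '' stripeS))
      ({((0 : ℝ), (0 : ℝ)), (0, 1 / 3), (0, 2 / 3)} : Finset (ℝ × ℝ)) = ∅ := by
  have hw : ((0 : ℝ), (1 / 3 : ℝ)) ≠ 0 := by simp [Prod.ext_iff]
  have two_w : ((0 : ℝ), (2 / 3 : ℝ)) = (0, 1 / 3) + (0, 1 / 3) := by norm_num
  have three_w : ((0 : ℝ), (1 : ℝ)) = (0, 1 / 3) + (0, 1 / 3) + (0, 1 / 3) := by norm_num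
  rw [two_w, ← Prod.zero_eq_mk, oddMink_symmDiff_shift_two_eq hw, ← three_w,
    stripeS_symmDiff_shift_one, oddMink_univ_pair hw]
end

section
/- Let A ⊆ ℤ be a finite nonempty set and let g : ℤ → ℤ/2ℤ. Say g is 0-stable with respect to A if Σ_{x ∈ A+p} g(x) = 0 for every p ∈ ℤ. Define f_k as in the recursion f_0 ≡ 1, f_k(0) = 1, f_k(t) = f_k(t−1) + f_{k−1}(t−1). If f_{k−1} is 0-stable with respect to A, then f_k is stable with respect to A, i.e., the value Σ_{x ∈ A+p} f_k(x) ∈ ℤ/2ℤ is independent of p ∈ ℤ. -/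
/-! If `g (t + 1) = g t + h t`, then translating `A` by one more step adds the sum of `h` over a
translate of `A`. When every such sum of `h` vanishes, the sums of `g` over translates of `A` are
`1`-periodic in the translation, hence constant on `ℤ`. -/

theorem periodic_sum_translate {M : Type*} [AddCommMonoid M] (A : Finset ℤ) {g h : ℤ → M}
    (hgh : ∀ t, g (t + 1) = g t + h t) (hh : ∀ p, ∑ x ∈ A, h (x + p) = 0) :
    Function.Periodic (fun p => ∑ x ∈ A, g (x + p)) 1 := by
  intro p
  calc ∑ x ∈ A, g (x + (p + 1)) = ∑ x ∈ A, (g (x + p) + h (x + p)) := by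
        simp only [← add_assoc, hgh]
    _ = ∑ x ∈ A, g (x + p) := by rw [Finset.sum_add_distrib, hh, add_zero]

theorem f_stable_of_prev_zero_stable_general (f : ℕ → ℤ → ZMod 2)
    (hr : ∀ (k : ℕ) (t : ℤ), f (k + 1) t = f (k + 1) (t - 1) + f k (t - 1))
    (A : Finset ℤ) (k : ℕ)
    (hstab : ∀ p : ℤ, ∑ x ∈ A, f k (x + p) = 0) :
    ∀ p q : ℤ, ∑ x ∈ A, f (k + 1) (x + p) = ∑ x ∈ A, f (k + 1) (x + q) := by
  have hstep : ∀ t, f (k + 1) (t + 1) = f (k + 1) t + f k t := fun t => by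
    simpa only [add_sub_cancel_right] using hr k (t + 1)
  have hconst : ∀ p, ∑ x ∈ A, f (k + 1) (x + p) = ∑ x ∈ A, f (k + 1) (x + 0) := fun p => by
    simpa only [mul_one, Int.cast_id] using (periodic_sum_translate A hstep hstab).int_mul_eq p
  intro p q
  rw [hconst p, hconst q]

theorem f_stable_of_prev_zero_stable (f : ℕ → ℤ → ZMod 2)
    (h0 : ∀ t : ℤ, f 0 t = 1)
    (hb : ∀ k : ℕ, f (k + 1) 0 = 1)
    (hr : ∀ (k : ℕ) (t : ℤ), f (k + 1) t = f (k + 1) (t - 1) + f k (t - 1))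
    (A : Finset ℤ) (hA : A.Nonempty) (k : ℕ)
    (hstab : ∀ p : ℤ, ∑ x ∈ A, f k (x + p) = 0) :
    ∀ p q : ℤ, ∑ x ∈ A, f (k + 1) (x + p) = ∑ x ∈ A, f (k + 1) (x + q) :=
  f_stable_of_prev_zero_stable_general f hr A k hstab
end

section
/- For every finite nonempty set A ⊆ ℤ there exists a function g : ℤ → ℤ/2ℤ and an integer p such that Σ_{x ∈ A+p} g(x) = 1, while for all integers p, q, Σ_{x ∈ A+p} g(x) = Σ_{x ∈ A+q} g(x). In other words, there is a ℤ/2ℤ-weighting of ℤ that is stable but not 0-stable with respect to A. -/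
private lemma z2_helper (a b c : ZMod 2) (h : a = b + c) : c = a + b := by
  rw [← CharTwo.sub_eq_add, h]
  ring

private lemma xor_sum (A S T : Finset ℤ) (h : ∀ x, x ∈ A ↔ ((x ∈ S) ↔ (x ∉ T)))
    (f : ℤ → ZMod 2) : ∑ x ∈ A, f x = ∑ x ∈ S, f x + ∑ x ∈ T, f x := by
  classical
  set U : Finset ℤ := A ∪ S ∪ T with hU
  have hAU : A ⊆ U := by intro x hx; simp [hU, hx]
  have hSU : S ⊆ U := by intro x hx; simp [hU, hx]
  have hTU : T ⊆ U := by intro x hx; simp [hU, hx]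
  have e1 : ∑ x ∈ A, f x = ∑ x ∈ U, (if x ∈ A then f x else 0) := by
    rw [Finset.sum_ite_mem, Finset.inter_eq_right.mpr hAU]
  have e2 : ∑ x ∈ S, f x = ∑ x ∈ U, (if x ∈ S then f x else 0) := by
    rw [Finset.sum_ite_mem, Finset.inter_eq_right.mpr hSU]
  have e3 : ∑ x ∈ T, f x = ∑ x ∈ U, (if x ∈ T then f x else 0) := by
    rw [Finset.sum_ite_mem, Finset.inter_eq_right.mpr hTU]
  rw [e1, e2, e3, ← Finset.sum_add_distrib]
  apply Finset.sum_congr rfl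
  intro x _
  by_cases hS : x ∈ S <;> by_cases hT : x ∈ T
  · have hxA : x ∉ A := by rw [h x]; simp [hS, hT]
    simp [hxA, hS, hT, CharTwo.add_self_eq_zero]
  · have hxA : x ∈ A := by rw [h x]; simp [hS, hT]
    simp [hxA, hS, hT]
  · have hxA : x ∈ A := by rw [h x]; simp [hS, hT]
    simp [hxA, hS, hT]
  · have hxA : x ∉ A := by rw [h x]; simp [hS, hT]
    simp [hxA, hS, hT]

private lemma odd_case (A : Finset ℤ) (hodd : Odd A.card) :
    ∃ g : ℤ → ZMod 2, ∀ p : ℤ, ∑ x ∈ A, g (x + p) = 1 := by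
  refine ⟨fun _ => 1, fun p => ?_⟩
  rw [Finset.sum_const, nsmul_eq_mul, mul_one]
  have h1 : A.card % 2 = 1 := Nat.odd_iff.mp hodd
  have h2 : ((A.card % 2 : ℕ) : ZMod 2) = (A.card : ZMod 2) := ZMod.natCast_mod _ 2
  rw [← h2, h1, Nat.cast_one]

private lemma main_lemma : ∀ n : ℕ, ∀ A : Finset ℤ, ∀ hA : A.Nonempty,
    (A.max' hA - A.min' hA).toNat ≤ n →
    ∃ g : ℤ → ZMod 2, ∀ p : ℤ, ∑ x ∈ A, g (x + p) = 1 := by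
  intro n
  induction n with
  | zero =>
    intro A hA hle
    rcases Nat.even_or_odd A.card with heven | hodd
    · exfalso
      have h0 : A.card ≠ 0 := Finset.card_ne_zero_of_mem (hA.choose_spec)
      have h2 : 1 < A.card := by
        rcases heven with ⟨k, hk⟩; omega
      have := A.min'_lt_max'_of_card h2
      omega
    · exact odd_case A hodd
  | succ n ih =>
    intro A hA hle
    rcases Nat.even_or_odd A.card with heven | hodd
    swap
    · exact odd_case A hodd
    -- even case
    have h0 : A.card ≠ 0 := Finset.card_ne_zero_of_mem (hA.choose_spec)
    have hcard2 : 1 < A.card := by rcases heven with ⟨k, hk⟩; omega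
    set m := A.min' hA with hm
    set M := A.max' hA with hM
    have hmM : m < M := A.min'_lt_max'_of_card hcard2
    set c : ℤ → ℕ := fun i => (A.filter (· ≤ i)).card with hc
    have hstep : ∀ x : ℤ, c x = c (x - 1) + (if x ∈ A then 1 else 0) := by
      intro x
      have hsplit : A.filter (· ≤ x) = A.filter (· ≤ x - 1) ∪ A.filter (· = x) := by
        ext a
        simp only [Finset.mem_filter, Finset.mem_union]
        constructor
        · rintro ⟨h1, h2⟩
          by_cases hax : a = x
          · exact Or.inr ⟨h1, hax⟩
          · exact Or.inl ⟨h1, by omega⟩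
        · rintro (⟨h1, h2⟩ | ⟨h1, h2⟩)
          · exact ⟨h1, by omega⟩
          · exact ⟨h1, by omega⟩
      have hdisj : Disjoint (A.filter (· ≤ x - 1)) (A.filter (· = x)) := by
        rw [Finset.disjoint_filter]
        intro a _ h1 h2
        omega
      have heq : (A.filter (· = x)).card = if x ∈ A then 1 else 0 := by
        rw [Finset.filter_eq' A x]
        by_cases hx : x ∈ A <;> simp [hx]
      simp only [hc]
      rw [hsplit, Finset.card_union_of_disjoint hdisj, heq]
    have hclow : ∀ x : ℤ, x < m → c x = 0 := by
      intro x hx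
      simp only [hc]
      rw [Finset.card_eq_zero, Finset.filter_eq_empty_iff]
      intro a ha
      have := A.min'_le a ha
      simp only [← hm] at this
      intro hax
      omega
    have hchigh : ∀ x : ℤ, M ≤ x → c x = A.card := by
      intro x hx
      simp only [hc]
      congr 1
      rw [Finset.filter_eq_self]
      intro a ha
      have := A.le_max' a ha
      simp only [← hM] at this
      omega
    set A₁ : Finset ℤ := (Finset.Ico m M).filter (fun i => c i % 2 = 1) with hA₁def
    have hmemA₁ : ∀ x : ℤ, x ∈ A₁ ↔ c x % 2 = 1 := by
      intro x
      simp only [hA₁def, Finset.mem_filter, Finset.mem_Ico]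
      constructor
      · rintro ⟨_, h⟩; exact h
      · intro h
        refine ⟨⟨?_, ?_⟩, h⟩
        · by_contra hlt
          rw [hclow x (by omega)] at h
          omega
        · by_contra hge
          rw [hchigh x (by omega)] at h
          rcases heven with ⟨k, hk⟩
          omega
    have hcm : c m = 1 := by
      simp only [hc]
      rw [Finset.card_eq_one]
      refine ⟨m, ?_⟩
      ext a
      simp only [Finset.mem_filter, Finset.mem_singleton]
      constructor
      · rintro ⟨ha, hle⟩
        have := A.min'_le a ha
        simp only [← hm] at this
        omega
      · rintro rfl
        exact ⟨A.min'_mem hA, le_refl _⟩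
    have hA₁ne : A₁.Nonempty := by
      refine ⟨m, ?_⟩
      rw [hmemA₁, hcm]
    have hA₁sub : A₁ ⊆ Finset.Ico m M := Finset.filter_subset _ _
    have hmeas : (A₁.max' hA₁ne - A₁.min' hA₁ne).toNat ≤ n := by
      have h1 := hA₁sub (A₁.max'_mem hA₁ne)
      have h2 := hA₁sub (A₁.min'_mem hA₁ne)
      rw [Finset.mem_Ico] at h1 h2
      omega
    obtain ⟨g₁, hg₁⟩ := ih A₁ hA₁ne hmeas
    set g : ℤ → ZMod 2 := fun x =>
      if 0 ≤ x then ∑ y ∈ Finset.Ico (0:ℤ) x, g₁ y else ∑ y ∈ Finset.Ico x (0:ℤ), g₁ y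
      with hgdef
    have hg : ∀ x : ℤ, g (x + 1) = g x + g₁ x := by
      intro x
      by_cases hx : 0 ≤ x
      · have hx1 : (0:ℤ) ≤ x + 1 := by omega
        simp only [hgdef, if_pos hx, if_pos hx1]
        have hins : Finset.Ico (0:ℤ) (x+1) = insert x (Finset.Ico (0:ℤ) x) := by
          ext a
          simp only [Finset.mem_Ico, Finset.mem_insert]
          omega
        rw [hins, Finset.sum_insert (by simp), add_comm]
      · have hgx : g x = g₁ x + (∑ y ∈ Finset.Ico (x+1) (0:ℤ), g₁ y) := by
          simp only [hgdef, if_neg hx]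
          have hins : Finset.Ico x (0:ℤ) = insert x (Finset.Ico (x+1) (0:ℤ)) := by
            ext a
            simp only [Finset.mem_Ico, Finset.mem_insert]
            omega
          rw [hins, Finset.sum_insert (by simp)]
        have hgx1 : g (x + 1) = ∑ y ∈ Finset.Ico (x+1) (0:ℤ), g₁ y := by
          by_cases hx1 : 0 ≤ x + 1
          · have hx10 : x + 1 = 0 := by omega
            simp only [hgdef, if_pos hx1, hx10]
            simp
          · simp only [hgdef, if_neg hx1]
        rw [hgx1]
        exact z2_helper (g x) (g₁ x) _ hgx
    set T : Finset ℤ := A₁.map ⟨fun x => x + 1, add_left_injective 1⟩ with hTdef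
    have hmemT : ∀ x : ℤ, x ∈ T ↔ x - 1 ∈ A₁ := by
      intro x
      simp only [hTdef, Finset.mem_map, Function.Embedding.coeFn_mk]
      constructor
      · rintro ⟨a, ha, rfl⟩
        simpa using ha
      · intro h
        exact ⟨x - 1, h, by ring⟩
    have hxor : ∀ x : ℤ, x ∈ A ↔ ((x ∈ A₁) ↔ (x ∉ T)) := by
      intro x
      rw [hmemA₁, hmemT, hmemA₁]
      have := hstep x
      by_cases hx : x ∈ A
      · simp only [if_pos hx] at this
        simp only [hx, true_iff]
        omega
      · simp only [if_neg hx] at this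
        simp only [hx, false_iff]
        omega
    refine ⟨g, fun p => ?_⟩
    rw [xor_sum A A₁ T hxor (fun x => g (x + p))]
    have hTsum : ∑ x ∈ T, g (x + p) = ∑ x ∈ A₁, g (x + 1 + p) := by
      simp only [hTdef, Finset.sum_map, Function.Embedding.coeFn_mk]
    rw [hTsum, ← Finset.sum_add_distrib]
    have : ∀ x ∈ A₁, g (x + p) + g (x + 1 + p) = g₁ (x + p) := by
      intro x _
      have h1 : x + 1 + p = (x + p) + 1 := by ring
      rw [h1, hg (x + p)]
      rw [← add_assoc, CharTwo.add_self_eq_zero, zero_add]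
    rw [Finset.sum_congr rfl this]
    exact hg₁ p

theorem exists_stable_not_zero_stable (A : Finset ℤ) (hA : A.Nonempty) :
    ∃ g : ℤ → ZMod 2,
      (∀ p q : ℤ, ∑ x ∈ A, g (x + p) = ∑ x ∈ A, g (x + q)) ∧
      (∃ p : ℤ, ∑ x ∈ A, g (x + p) = 1) := by
  obtain ⟨g, hg⟩ := main_lemma (A.max' hA - A.min' hA).toNat A hA (le_refl _)
  exact ⟨g, fun p q => by rw [hg p, hg q], ⟨0, hg 0⟩⟩
end

section
/- Let 𝒜 be a nonempty (possibly infinite) family of finite nonempty subsets of ℤ^d. Then there exists a function F : ℤ^d → ℤ/2ℤ such that for every A ∈ 𝒜 the value Σ_{x ∈ A+p} F(x) is independent of p ∈ ℤ^d (stability), and there exists some A ∈ 𝒜 with Σ_{x ∈ A} F(x) = 1 (not 0-stable). -/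
/-!
Work in the group algebra `k[G]` of a finitely generated torsion-free abelian group over a field,
a noetherian domain, and attach to a finite set `A` the element `f_A = ∑_{a ∈ A} X^a`. A function
`F : G → k` is a linear functional `ψ` on `k[G]` via `F x = ψ (X^x)`, and `F` is stable for `A`
iff `ψ` kills `f_A (X^p - X^q)` for all `p, q`. If every `f_A` lay in the span of these elements,
then the ideal `I` generated by the `f_A` would satisfy `I ≤ 𝔪 I` for the augmentation ideal `𝔪`,
and Nakayama's lemma in a noetherian domain forces `I = 0`, contradicting `f_A ≠ 0`. So some `f_A`
is outside that span, and a functional separating it gives the required `F`.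
-/

open AddMonoidAlgebra

theorem Ideal.eq_bot_of_le_mul_of_ne_top {R : Type*} [CommRing R] [IsNoetherianRing R]
    [NoZeroDivisors R] {m I : Ideal R} (hm : m ≠ ⊤) (h : I ≤ m * I) : I = ⊥ := by
  obtain ⟨r, hr1, hr⟩ := Submodule.exists_sub_one_mem_and_smul_eq_zero_of_fg_of_le_smul m I
    (IsNoetherian.noetherian I) h
  have hr0 : r ≠ 0 := by
    rintro rfl
    exact hm (m.eq_top_of_isUnit_mem hr1 (by simp))
  exact eq_bot_iff.2 fun x hx => (mul_eq_zero.1 (hr x hx)).resolve_left hr0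

namespace AddMonoidAlgebra

section Semiring

variable (k : Type*) {G : Type*}

noncomputable def ofFinset [Semiring k] (A : Finset G) : k[G] := ∑ a ∈ A, single a 1

variable {k}

theorem ofFinset_ne_zero [Semiring k] [Nontrivial k] {A : Finset G} (hA : A.Nonempty) :
    ofFinset k A ≠ 0 := by
  classical
  obtain ⟨a, ha⟩ := hA
  refine ne_of_apply_ne (fun f : k[G] => f.coeff a) ?_
  simp [ofFinset, coeff_sum, coeff_single, Finsupp.finsetSum_apply, Finsupp.single_apply, ha]

theorem ofFinset_mul_single [Semiring k] [AddCommMonoid G] (A : Finset G) (p : G) :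
    ofFinset k A * single p 1 = ∑ x ∈ A, single (x + p) 1 := by
  simp only [ofFinset, Finset.sum_mul, single_mul_single, one_mul]

end Semiring

section Field

variable (k : Type*) {G : Type*} [Field k] [AddCommGroup G]

noncomputable def augmentation : k[G] →ₐ[k] k := lift k k G 1

noncomputable def translateDiffSpan (𝒜 : Set (Finset G)) : Submodule k k[G] :=
  Submodule.span k
    {z | ∃ A ∈ 𝒜, ∃ p q : G, z = ofFinset k A * (single p 1 - single q 1)}

variable {k}

theorem augmentation_single (a : G) (c : k) : augmentation k (single a c) = c := by
  simp [augmentation, lift_single]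

theorem single_sub_single_mem_ker_augmentation (p q : G) :
    (single p 1 - single q 1 : k[G]) ∈ RingHom.ker (augmentation k : k[G] →ₐ[k] k) := by
  simp [RingHom.mem_ker, augmentation_single]

variable [AddMonoid.FG G] [IsAddTorsionFree G]

theorem exists_ofFinset_notMem_translateDiffSpan {𝒜 : Set (Finset G)} (h𝒜 : 𝒜.Nonempty)
    (hne : ∀ A ∈ 𝒜, A.Nonempty) : ∃ A ∈ 𝒜, ofFinset k A ∉ translateDiffSpan k 𝒜 := by
  have : IsNoetherianRing k[G] := Algebra.FiniteType.isNoetherianRing k _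
  by_contra! h
  set I : Ideal k[G] := Ideal.span (ofFinset k '' 𝒜)
  set m : Ideal k[G] := RingHom.ker (augmentation k : k[G] →ₐ[k] k)
  have hspan_le : translateDiffSpan k 𝒜 ≤ (m * I).restrictScalars k := by
    refine Submodule.span_le.2 ?_
    rintro _ ⟨A, hA, p, q, rfl⟩
    exact Ideal.mul_mem_mul_rev (single_sub_single_mem_ker_augmentation p q)
      (Ideal.subset_span ⟨A, hA, rfl⟩)
  have hI : I = ⊥ := Ideal.eq_bot_of_le_mul_of_ne_top (RingHom.ker_ne_top _) <|
    Ideal.span_le.2 fun _ ⟨A, hA, hz⟩ => hz ▸ hspan_le (h A hA)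
  obtain ⟨A, hA⟩ := h𝒜
  refine ofFinset_ne_zero (k := k) (hne A hA) ?_
  rw [← Ideal.mem_bot, ← hI]
  exact Ideal.subset_span ⟨A, hA, rfl⟩

theorem exists_stable_sum_ne_zero {𝒜 : Set (Finset G)} (h𝒜 : 𝒜.Nonempty)
    (hne : ∀ A ∈ 𝒜, A.Nonempty) :
    ∃ F : G → k, (∀ A ∈ 𝒜, ∀ p q : G, ∑ x ∈ A, F (x + p) = ∑ x ∈ A, F (x + q)) ∧
      ∃ A ∈ 𝒜, ∑ x ∈ A, F x ≠ 0 := by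
  obtain ⟨A₀, hA₀, hA₀M⟩ := exists_ofFinset_notMem_translateDiffSpan (k := k) h𝒜 hne
  obtain ⟨ψ, hψA₀, hψM⟩ := Submodule.exists_dual_map_eq_bot_of_notMem hA₀M inferInstance
  have hψ_translate (A : Finset G) (p : G) :
      ∑ x ∈ A, ψ (single (x + p) 1) = ψ (ofFinset k A * single p 1) := by
    rw [ofFinset_mul_single, map_sum]
  refine ⟨fun x => ψ (single x 1), fun A hA p q => ?_, A₀, hA₀, ?_⟩
  · have hmem : ofFinset k A * (single p 1 - single q 1) ∈ translateDiffSpan k 𝒜 :=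
      Submodule.subset_span ⟨A, hA, p, q, rfl⟩
    have hzero := Submodule.mem_map_of_mem (f := ψ) hmem
    rw [hψM, Submodule.mem_bot, mul_sub, map_sub, sub_eq_zero] at hzero
    simp only [hψ_translate, hzero]
  · simpa only [ofFinset, map_sum] using hψA₀

theorem exists_stable_sum_eq_one {𝒜 : Set (Finset G)} (h𝒜 : 𝒜.Nonempty)
    (hne : ∀ A ∈ 𝒜, A.Nonempty) :
    ∃ F : G → k, (∀ A ∈ 𝒜, ∀ p q : G, ∑ x ∈ A, F (x + p) = ∑ x ∈ A, F (x + q)) ∧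
      ∃ A ∈ 𝒜, ∑ x ∈ A, F x = 1 := by
  obtain ⟨F, hF, A, hA, hFA⟩ := exists_stable_sum_ne_zero (k := k) h𝒜 hne
  refine ⟨fun x => (∑ y ∈ A, F y)⁻¹ * F x, fun B hB p q => ?_, A, hA, ?_⟩
  · simp only [← Finset.mul_sum, hF B hB p q]
  · rw [← Finset.mul_sum, inv_mul_cancel₀ hFA]

end Field

end AddMonoidAlgebra

theorem exists_stable_not_zero_stable_lattice (d : ℕ)
    (𝒜 : Set (Finset (Fin d → ℤ))) (h1 : 𝒜.Nonempty)
    (h2 : ∀ A ∈ 𝒜, A.Nonempty) :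
    ∃ F : (Fin d → ℤ) → ZMod 2,
      (∀ A ∈ 𝒜, ∀ p q : Fin d → ℤ, ∑ x ∈ A, F (x + p) = ∑ x ∈ A, F (x + q)) ∧
      (∃ A ∈ 𝒜, ∑ x ∈ A, F x = 1) := by
  have : AddMonoid.FG (Fin d → ℤ) :=
    AddGroup.fg_iff_addMonoid_fg.mp (Module.Finite.iff_addGroup_fg.mp inferInstance)
  exact AddMonoidAlgebra.exists_stable_sum_eq_one h1 h2
end

section
/- Let A ⊆ ℤ^d be a finite set on which a linear functional L : ℤ^d → ℤ attains its minimum at a unique point, and suppose the coefficient of the first coordinate in L is 1. Define F_k(a) = f_k(L(a)) where f_k : ℤ → ℤ/2ℤ satisfies f_0 ≡ 1, f_k(0)=1, f_k(t)=f_k(t−1)+f_{k−1}(t−1). If L(A) ⊆ [a, a+k] for some a ∈ ℤ where a is attained uniquely, then Σ_{x ∈ A} F_k(x − a·e₁) = 1 in ℤ/2ℤ. -/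
theorem F_weight_one (f : ℕ → ℤ → ZMod 2)
    (h0 : ∀ t : ℤ, f 0 t = 1)
    (hb : ∀ k : ℕ, f (k + 1) 0 = 1)
    (hr : ∀ (k : ℕ) (t : ℤ), f (k + 1) t = f (k + 1) (t - 1) + f k (t - 1))
    (d : ℕ) (L : (Fin (d + 1) → ℤ) →ₗ[ℤ] ℤ)
    (hL1 : L (Pi.single 0 1) = 1)
    (A : Finset (Fin (d + 1) → ℤ)) (k : ℕ) (a : ℤ)
    (hrange : ∀ x ∈ A, a ≤ L x ∧ L x ≤ a + k)
    (huniq : ∃! x, x ∈ A ∧ L x = a) :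
    ∑ x ∈ A, f k (L (x - a • Pi.single 0 1)) = 1 := by
  have hzero : ∀ m : ℕ, f m 0 = 1 := by
    intro m
    cases m with
    | zero => exact h0 0
    | succ m => exact hb m
  have key : ∀ (m n : ℕ), n ≤ m → f m (n : ℤ) = if n = 0 then 1 else 0 := by
    intro m
    induction m with
    | zero =>
      intro n hn
      interval_cases n
      simp [h0]
    | succ m ih =>
      intro n
      induction n with
      | zero => intro _; simp [hzero]
      | succ n ihn =>
        intro hn
        have h1 : f (m + 1) ((n : ℤ) + 1) = f (m + 1) (n : ℤ) + f m (n : ℤ) := by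
          have := hr m ((n : ℤ) + 1)
          simpa using this
        have h2 : f (m + 1) (n : ℤ) = if n = 0 then 1 else 0 :=
          ihn (Nat.le_of_succ_le hn)
        have h3 : f m (n : ℤ) = if n = 0 then 1 else 0 :=
          ih n (Nat.lt_succ_iff.mp hn)
        have : f (m + 1) ((n : ℤ) + 1) = 0 := by
          rw [h1, h2, h3]
          split <;> decide
        push_cast
        rw [this]
  have hterm : ∀ x ∈ A, f k (L (x - a • Pi.single 0 1)) = if L x = a then 1 else 0 := by
    intro x hx
    have hLv : L (x - a • Pi.single 0 1) = L x - a := by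
      rw [map_sub, map_smul, hL1]; simp
    obtain ⟨hlo, hhi⟩ := hrange x hx
    set t : ℤ := L x - a with ht
    have ht0 : 0 ≤ t := by omega
    have htk : t ≤ (k : ℤ) := by omega
    obtain ⟨n, hn⟩ : ∃ n : ℕ, t = (n : ℤ) := ⟨t.toNat, (Int.toNat_of_nonneg ht0).symm⟩
    have hnk : n ≤ k := by omega
    rw [hLv, hn, key k n hnk]
    have : (L x = a) ↔ (n = 0) := by omega
    simp [this]
  rw [Finset.sum_congr rfl hterm]
  obtain ⟨x0, ⟨hx0A, hx0⟩, hu⟩ := huniq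
  rw [Finset.sum_eq_single x0]
  · simp [hx0]
  · intro b hb hne
    simp only [ite_eq_right_iff]
    intro hba
    exact absurd (hu b ⟨hb, hba⟩) hne
  · intro h; exact absurd hx0A h
end

section
/- For the unit square Q = [0,1]² in the plane, the odd compression ratio equals 1: for every finite set Z ⊆ ℝ² of odd cardinality, the set of points covered by an odd number of the translates Q+z (z ∈ Z) has Lebesgue measure at least 1. -/
open scoped Classical
open MeasureTheory
open scoped ENNReal

namespace UnitSquareOddAux

/-- The closed unit square in `ℝ × ℝ`. -/
abbrev Q : Set (ℝ × ℝ) := Set.Icc (((0 : ℝ), (0 : ℝ))) ((1 : ℝ), (1 : ℝ))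

/-- Integer lattice vector as a point of the plane. -/
def v (n : ℤ × ℤ) : ℝ × ℝ := ((n.1 : ℝ), (n.2 : ℝ))

/-- Half-open unit tile with corner `n`. -/
def tile (n : ℤ × ℤ) : Set (ℝ × ℝ) :=
  Set.Ico (n.1 : ℝ) ((n.1 : ℝ) + 1) ×ˢ Set.Ico (n.2 : ℝ) ((n.2 : ℝ) + 1)

lemma mem_tile_iff {x : ℝ × ℝ} {n : ℤ × ℤ} :
    x ∈ tile n ↔ ⌊x.1⌋ = n.1 ∧ ⌊x.2⌋ = n.2 := by
  simp only [tile, Set.mem_prod, Set.mem_Ico, Int.floor_eq_iff]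

lemma measurable_tile (n : ℤ × ℤ) : MeasurableSet (tile n) :=
  measurableSet_Ico.prod measurableSet_Ico

lemma volume_tile (n : ℤ × ℤ) : volume (tile n) = 1 := by
  rw [tile, Measure.volume_eq_prod, Measure.prod_prod, Real.volume_Ico, Real.volume_Ico]
  norm_num

lemma tile_disjoint : Pairwise (Function.onFun Disjoint fun n : ℤ × ℤ => tile n) := by
  intro n m hnm
  rw [Function.onFun, Set.disjoint_left]
  intro x hxn hxm
  rw [mem_tile_iff] at hxn hxm
  exact hnm (Prod.ext (hxn.1 ▸ hxm.1) (hxn.2 ▸ hxm.2))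

lemma mem_tile_self (x : ℝ × ℝ) : x ∈ tile (⌊x.1⌋, ⌊x.2⌋) := by
  rw [mem_tile_iff]; exact ⟨rfl, rfl⟩

/-- Key one-dimensional computation. -/
lemma interval_lemma {t : ℝ} (ht : ∀ m : ℤ, t ≠ (m : ℝ)) (k : ℤ) :
    (0 ≤ t + (k : ℝ) ∧ t + (k : ℝ) ≤ 1) ↔ k = -⌊t⌋ := by
  constructor
  · rintro ⟨h0, h1⟩
    have hne0 : t + (k : ℝ) ≠ 0 := by
      intro h; exact ht (-k) (by push_cast; linarith)
    have hne1 : t + (k : ℝ) ≠ 1 := by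
      intro h; exact ht (1 - k) (by push_cast; linarith)
    have hfl : ⌊t + (k : ℝ)⌋ = 0 := by
      rw [Int.floor_eq_zero_iff]
      exact ⟨lt_of_le_of_ne h0 (Ne.symm hne0) |>.le, lt_of_le_of_ne h1 hne1⟩
    rw [Int.floor_add_intCast] at hfl
    omega
  · rintro rfl
    push_cast
    have hfr : t + -(⌊t⌋ : ℝ) = Int.fract t := by rw [Int.fract]; ring
    constructor
    · rw [hfr]; exact Int.fract_nonneg t
    · rw [hfr]; exact (Int.fract_lt_one t).le

/-- The central combinatorial fact: if `x` is "generic" with respect to `Z`,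
then some lattice translate of `x` is covered an odd number of times. -/
lemma exists_odd_lattice (Z : Finset (ℝ × ℝ)) (hZ : Odd Z.card) (x : ℝ × ℝ)
    (hx : ∀ z ∈ Z, (∀ m : ℤ, x.1 - z.1 ≠ (m : ℝ)) ∧ (∀ m : ℤ, x.2 - z.2 ≠ (m : ℝ))) :
    ∃ n : ℤ × ℤ, Odd ((Z.filter (fun z => (x + v n) - z ∈ Q)).card) := by
  classical
  have key : ∀ z ∈ Z, ∀ n : ℤ × ℤ,
      ((x + v n) - z ∈ Q ↔ ((-⌊x.1 - z.1⌋, -⌊x.2 - z.2⌋) : ℤ × ℤ) = n) := by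
    intro z hz n
    have h1 := (hx z hz).1
    have h2 := (hx z hz).2
    have e1 : ((x + v n) - z).1 = (x.1 - z.1) + (n.1 : ℝ) := by
      simp [v]; ring
    have e2 : ((x + v n) - z).2 = (x.2 - z.2) + (n.2 : ℝ) := by
      simp [v]; ring
    rw [Set.mem_Icc, Prod.le_def, Prod.le_def, e1, e2]
    have k1 := interval_lemma h1 n.1
    have k2 := interval_lemma h2 n.2
    constructor
    · rintro ⟨⟨a1, a2⟩, b1, b2⟩
      have c1 := k1.mp ⟨a1, b1⟩
      have c2 := k2.mp ⟨a2, b2⟩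
      exact Prod.ext c1.symm c2.symm
    · intro h
      have h1' : n.1 = -⌊x.1 - z.1⌋ := (congrArg Prod.fst h).symm
      have h2' : n.2 = -⌊x.2 - z.2⌋ := (congrArg Prod.snd h).symm
      have c1 := k1.mpr h1'
      have c2 := k2.mpr h2'
      exact ⟨⟨c1.1, c2.1⟩, c1.2, c2.2⟩
  set g : ℝ × ℝ → ℤ × ℤ := fun z => (-⌊x.1 - z.1⌋, -⌊x.2 - z.2⌋) with hg
  by_contra hcon
  push_neg at hcon
  have heven : Even Z.card := by
    rw [Finset.card_eq_sum_card_fiberwise (f := g) (t := Z.image g)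
      (fun z hz => Finset.mem_image_of_mem g hz)]
    apply Finset.even_sum
    intro n hn
    have hfe : Z.filter (fun z => g z = n) = Z.filter (fun z => (x + v n) - z ∈ Q) := by
      apply Finset.filter_congr
      intro z hz
      simp only [eq_iff_iff, hg]
      exact (key z hz n).symm
    rw [hfe]
    exact Nat.not_odd_iff_even.mp (hcon n)
  exact (Nat.not_even_iff_odd.mpr hZ) heven

/-- Measurability of the oddly covered set. -/
lemma measurable_E (Z : Finset (ℝ × ℝ)) :
    MeasurableSet {a : ℝ × ℝ | Odd ((Z.filter (fun z => a - z ∈ Q)).card)} := by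
  classical
  have hrw : {a : ℝ × ℝ | Odd ((Z.filter (fun z => a - z ∈ Q)).card)} =
      (fun a : ℝ × ℝ => (Z.filter (fun z => a - z ∈ Q)).card) ⁻¹' {k : ℕ | Odd k} := rfl
  rw [hrw]
  have hmeas : Measurable (fun a : ℝ × ℝ => (Z.filter (fun z => a - z ∈ Q)).card) := by
    have : (fun a : ℝ × ℝ => (Z.filter (fun z => a - z ∈ Q)).card) =
        fun a : ℝ × ℝ => ∑ z ∈ Z, if a - z ∈ Q then 1 else 0 := by
      funext a
      exact Finset.card_filter _ _
    rw [this]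
    apply Finset.measurable_sum
    intro z _
    apply Measurable.ite _ measurable_const measurable_const
    exact (measurable_id.sub_const z)
      (measurableSet_Icc (a := ((0:ℝ),(0:ℝ))) (b := ((1:ℝ),(1:ℝ))))
  exact hmeas MeasurableSet.of_discrete

/-- The union of the bad lines, a null set. -/
def B (Z : Finset (ℝ × ℝ)) : Set (ℝ × ℝ) :=
  ⋃ z ∈ Z, ⋃ m : ℤ, ({x : ℝ × ℝ | x.1 - z.1 = (m : ℝ)} ∪ {x : ℝ × ℝ | x.2 - z.2 = (m : ℝ)})

lemma volume_B (Z : Finset (ℝ × ℝ)) : volume (B Z) = 0 := by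
  rw [B]
  refine measure_biUnion_null_iff (Z.countable_toSet) |>.mpr ?_
  intro z _
  refine measure_iUnion_null_iff.mpr ?_
  intro m
  rw [measure_union_null_iff]
  constructor
  · have h : {x : ℝ × ℝ | x.1 - z.1 = (m : ℝ)} = ({z.1 + m} : Set ℝ) ×ˢ (Set.univ : Set ℝ) := by
      ext x
      simp only [Set.mem_setOf_eq, Set.mem_prod, Set.mem_singleton_iff, Set.mem_univ, and_true]
      constructor <;> intro h <;> linarith
    rw [h, Measure.volume_eq_prod, Measure.prod_prod, Real.volume_singleton, zero_mul]
  · have h : {x : ℝ × ℝ | x.2 - z.2 = (m : ℝ)} = (Set.univ : Set ℝ) ×ˢ ({z.2 + m} : Set ℝ) := by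
      ext x
      simp only [Set.mem_setOf_eq, Set.mem_prod, Set.mem_singleton_iff, Set.mem_univ, true_and]
      constructor <;> intro h <;> linarith
    rw [h, Measure.volume_eq_prod, Measure.prod_prod, Real.volume_singleton, mul_zero]

lemma not_mem_B {Z : Finset (ℝ × ℝ)} {x : ℝ × ℝ} (h : x ∉ B Z) :
    ∀ z ∈ Z, (∀ m : ℤ, x.1 - z.1 ≠ (m : ℝ)) ∧ (∀ m : ℤ, x.2 - z.2 ≠ (m : ℝ)) := by
  intro z hz
  constructor <;> intro m hm <;> exact h (by
    rw [B]
    refine Set.mem_biUnion hz (Set.mem_iUnion.mpr ⟨m, ?_⟩)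
    first
    | exact Or.inl hm
    | exact Or.inr hm)

end UnitSquareOddAux

open UnitSquareOddAux in
theorem unit_square_odd_compression (Z : Finset (ℝ × ℝ)) (hZ : Odd Z.card) :
    1 ≤ volume {a : ℝ × ℝ |
      Odd ((Z.filter (fun z => a - z ∈ Set.Icc (((0 : ℝ), (0 : ℝ))) ((1 : ℝ), (1 : ℝ)))).card)} := by
  classical
  set E : Set (ℝ × ℝ) := {a : ℝ × ℝ | Odd ((Z.filter (fun z => a - z ∈ Q)).card)} with hE
  show 1 ≤ volume E
  have hEm : MeasurableSet E := measurable_E Z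
  have hsub : tile ((0 : ℤ), (0 : ℤ)) ⊆
      B Z ∪ ⋃ n : ℤ × ℤ, (tile ((0 : ℤ), (0 : ℤ)) ∩ (fun y => y + v n) ⁻¹' E) := by
    intro x hx
    by_cases hB : x ∈ B Z
    · exact Or.inl hB
    · obtain ⟨n, hn⟩ := exists_odd_lattice Z hZ x (not_mem_B hB)
      exact Or.inr (Set.mem_iUnion.mpr ⟨n, hx, hn⟩)
  have htrans : ∀ n : ℤ × ℤ,
      tile ((0 : ℤ), (0 : ℤ)) ∩ (fun y => y + v n) ⁻¹' E =
      (fun y => y + v n) ⁻¹' (tile n ∩ E) := by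
    intro n
    ext x
    simp only [Set.mem_inter_iff, Set.mem_preimage]
    constructor
    · rintro ⟨h1, h2⟩
      refine ⟨?_, h2⟩
      rw [mem_tile_iff] at h1 ⊢
      simp only [v, Prod.fst_add, Prod.snd_add] at *
      rw [Int.floor_add_intCast, Int.floor_add_intCast]
      omega
    · rintro ⟨h1, h2⟩
      refine ⟨?_, h2⟩
      rw [mem_tile_iff] at h1 ⊢
      simp only [v, Prod.fst_add, Prod.snd_add] at *
      rw [Int.floor_add_intCast, Int.floor_add_intCast] at h1
      omega
  have hEtiles : E = ⋃ n : ℤ × ℤ, (tile n ∩ E) := by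
    ext x
    simp only [Set.mem_iUnion, Set.mem_inter_iff]
    constructor
    · intro hx
      exact ⟨(⌊x.1⌋, ⌊x.2⌋), mem_tile_self x, hx⟩
    · rintro ⟨n, _, hx⟩
      exact hx
  calc (1 : ℝ≥0∞) = volume (tile ((0 : ℤ), (0 : ℤ))) := (volume_tile _).symm
    _ ≤ volume (B Z ∪ ⋃ n : ℤ × ℤ, (tile ((0 : ℤ), (0 : ℤ)) ∩ (fun y => y + v n) ⁻¹' E)) :=
        measure_mono hsub
    _ ≤ volume (B Z) +
        volume (⋃ n : ℤ × ℤ, (tile ((0 : ℤ), (0 : ℤ)) ∩ (fun y => y + v n) ⁻¹' E)) :=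
        measure_union_le _ _
    _ = volume (⋃ n : ℤ × ℤ, (tile ((0 : ℤ), (0 : ℤ)) ∩ (fun y => y + v n) ⁻¹' E)) := by
        rw [volume_B, zero_add]
    _ ≤ ∑' n : ℤ × ℤ, volume (tile ((0 : ℤ), (0 : ℤ)) ∩ (fun y => y + v n) ⁻¹' E) :=
        measure_iUnion_le _
    _ = ∑' n : ℤ × ℤ, volume (tile n ∩ E) := by
        refine tsum_congr fun n => ?_
        rw [htrans n, measure_preimage_add_right]
    _ = volume (⋃ n : ℤ × ℤ, (tile n ∩ E)) := by
        refine (measure_iUnion ?_ ?_).symm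
        · intro n m hnm
          exact (tile_disjoint hnm).mono Set.inter_subset_left Set.inter_subset_left
        · intro n
          exact (measurable_tile n).inter hEm
    _ = volume E := by rw [← hEtiles]
end

section
/- Let T be the closed triangle with vertices a, b, c in ℝ², and let Λ be the lattice spanned by ½(b−a) and ½(c−a). Then every point of the plane not on the boundary of any translate T+z (z ∈ Λ) is covered by the family {T+z : z ∈ Λ} either exactly 1 or exactly 3 times; in particular this family is an odd cover of the plane (every point outside a measure-zero set is covered an odd, uniformly bounded number of times). -/
/-!
In barycentric coordinates `(λ₀, λ₁, λ₂)` with respect to `a, b, c`, the point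
`p - (m • ½(b - a) + n • ½(c - a))` has coordinates `(λ₀ + (m + n)/2, λ₁ - m/2, λ₂ - n/2)`.
So, with `x = 2λ₁(p)` and `y = 2λ₂(p)`, the translates containing `p` correspond to the integer
points `(m, n)` with `m ≤ x`, `n ≤ y`, `m + n ≥ x + y - 2`, a triangle of side 2. Off the
boundaries these inequalities are strict, and such a triangle contains three integer points if the
fractional parts satisfy `{x} + {y} < 1` and one if `{x} + {y} > 1`.
-/

open Set Module

/-- The integer points `(m, n)` with `(x - m, y - n)` in the triangle `s, t ≥ 0, s + t ≤ 2`. -/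
def latticeTriangle (x y : ℝ) : Set (ℤ × ℤ) :=
  {q | (q.1 : ℝ) ≤ x ∧ (q.2 : ℝ) ≤ y ∧ x + y - 2 ≤ q.1 + q.2}

namespace latticeTriangle

variable {x y : ℝ}

theorem floor_mem : (⌊x⌋, ⌊y⌋) ∈ latticeTriangle x y :=
  ⟨Int.floor_le x, Int.floor_le y, by linarith [Int.lt_floor_add_one x, Int.lt_floor_add_one y]⟩

theorem le_floor {q : ℤ × ℤ} (hq : q ∈ latticeTriangle x y) : q.1 ≤ ⌊x⌋ ∧ q.2 ≤ ⌊y⌋ :=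
  ⟨Int.le_floor.mpr hq.1, Int.le_floor.mpr hq.2.1⟩

theorem eq_singleton (h : ((⌊x⌋ + ⌊y⌋ - 1 : ℤ) : ℝ) < x + y - 2) :
    latticeTriangle x y = {(⌊x⌋, ⌊y⌋)} := by
  refine Subset.antisymm (fun q hq => ?_) (singleton_subset_iff.mpr floor_mem)
  obtain ⟨h1, h2⟩ := le_floor hq
  have : ⌊x⌋ + ⌊y⌋ - 1 < q.1 + q.2 := by exact_mod_cast h.trans_le hq.2.2
  exact Prod.ext (by omega) (by omega)

theorem eq_triple (h₁ : ((⌊x⌋ + ⌊y⌋ - 2 : ℤ) : ℝ) < x + y - 2)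
    (h₂ : x + y - 2 < ((⌊x⌋ + ⌊y⌋ - 1 : ℤ) : ℝ)) :
    latticeTriangle x y = {(⌊x⌋, ⌊y⌋), (⌊x⌋ - 1, ⌊y⌋), (⌊x⌋, ⌊y⌋ - 1)} := by
  refine Subset.antisymm (fun q hq => ?_) ?_
  · obtain ⟨h1, h2⟩ := le_floor hq
    have : ⌊x⌋ + ⌊y⌋ - 2 < q.1 + q.2 := by exact_mod_cast h₁.trans_le hq.2.2
    obtain ⟨m, n⟩ := q
    simp only [mem_insert_iff, mem_singleton_iff, Prod.mk.injEq]
    omega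
  · have := Int.floor_le x
    have := Int.floor_le y
    push_cast at h₂
    simp only [insert_subset_iff, singleton_subset_iff, latticeTriangle, mem_ofPred_eq]
    push_cast
    refine ⟨⟨?_, ?_, ?_⟩, ⟨?_, ?_, ?_⟩, ⟨?_, ?_, ?_⟩⟩ <;> linarith

theorem ncard_eq_one_or_three
    (hgen : ∀ q ∈ latticeTriangle x y, (q.1 : ℝ) < x ∧ (q.2 : ℝ) < y ∧ x + y - 2 < q.1 + q.2) :
    (latticeTriangle x y).ncard = 1 ∨ (latticeTriangle x y).ncard = 3 := by
  obtain ⟨hx, hy, -⟩ := hgen _ floor_mem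
  rcases lt_trichotomy ((⌊x⌋ + ⌊y⌋ - 1 : ℤ) : ℝ) (x + y - 2) with h | h | h
  · left
    rw [eq_singleton h, ncard_singleton]
  · have hmem : (⌊x⌋ - 1, ⌊y⌋) ∈ latticeTriangle x y := by
      refine ⟨?_, Int.floor_le y, ?_⟩ <;> push_cast at h ⊢ <;> linarith [Int.floor_le x]
    have := (hgen _ hmem).2.2
    push_cast at h this
    linarith
  · right
    have h₁ : ((⌊x⌋ + ⌊y⌋ - 2 : ℤ) : ℝ) < x + y - 2 := by push_cast; linarith
    rw [eq_triple h₁ h, ncard_eq_three]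
    refine ⟨_, _, _, ?_, ?_, ?_, rfl⟩ <;> simp only [ne_eq, Prod.mk.injEq] <;> omega

end latticeTriangle

section AffineBasis

variable {k V P : Type*} [Field k] [AddCommGroup V] [Module k V] [AddTorsor V P]

theorem exists_affineBasis_of_not_collinear [FiniteDimensional k V] (hV : finrank k V = 2)
    {a b c : P} (h : ¬ Collinear k ({a, b, c} : Set P)) :
    ∃ B : AffineBasis (Fin 3) k P, ⇑B = ![a, b, c] := by
  have hind := affineIndependent_iff_not_collinear_set.mpr h
  exact ⟨⟨_, hind, hind.affineSpan_eq_top_iff_card_eq_finrank_add_one.mpr (by simp [hV])⟩, rfl⟩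

theorem AffineBasis.range_eq_of_coe_eq {a b c : P} {B : AffineBasis (Fin 3) k P}
    (hB : ⇑B = ![a, b, c]) : range B = {a, b, c} := by
  simp_rw [hB, Matrix.range_cons, Matrix.range_empty, singleton_union, insert_empty_eq]

theorem AffineBasis.coord_sub {ι : Type*} (B : AffineBasis ι k V) (i : ι) (x v : V) :
    B.coord i (x - v) = B.coord i x - (B.coord i).linear v := by
  rw [sub_eq_neg_add, ← vadd_eq_add, AffineMap.map_vadd, map_neg, vadd_eq_add]
  ring

theorem AffineBasis.coord_linear_sub {ι : Type*} [DecidableEq ι] (B : AffineBasis ι k V)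
    (i j l : ι) :
    (B.coord i).linear (B j - B l) = (if i = j then 1 else 0) - (if i = l then 1 else 0) := by
  rw [← vsub_eq_sub, AffineMap.linearMap_vsub, B.coord_apply, B.coord_apply, vsub_eq_sub]

theorem AffineBasis.coord_sub_smul_add_smul {a b c : V} {B : AffineBasis (Fin 3) k V}
    (hB : ⇑B = ![a, b, c]) (p : V) (s t : k) :
    B.coord 0 (p - (s • (b - a) + t • (c - a))) = 1 - B.coord 1 p - B.coord 2 p + s + t ∧
      B.coord 1 (p - (s • (b - a) + t • (c - a))) = B.coord 1 p - s ∧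
      B.coord 2 (p - (s • (b - a) + t • (c - a))) = B.coord 2 p - t := by
  have hsum : B.coord 0 p + B.coord 1 p + B.coord 2 p = 1 := by
    rw [← Fin.sum_univ_three fun i => B.coord i p, B.sum_coord_apply_eq_one]
  have hba : b - a = B 1 - B 0 := by simp [hB]
  have hca : c - a = B 2 - B 0 := by simp [hB]
  simp only [B.coord_sub, map_add, map_smul, hba, hca, B.coord_linear_sub, Fin.reduceEq,
    ↓reduceIte, sub_self, sub_zero, zero_sub, smul_eq_mul, mul_neg, mul_one, mul_zero, add_zero,
    zero_add, and_true]
  linear_combination hsum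

end AffineBasis

section HalfEdgeLattice

variable {E : Type*} [NormedAddCommGroup E] [NormedSpace ℝ E] {a b c : E}
  {B : AffineBasis (Fin 3) ℝ E}

noncomputable def halfEdgeLatticePoint (a b c : E) (q : ℤ × ℤ) : E :=
  q.1 • ((2 : ℝ)⁻¹ • (b - a)) + q.2 • ((2 : ℝ)⁻¹ • (c - a))

theorem halfEdgeLatticePoint_eq (q : ℤ × ℤ) :
    halfEdgeLatticePoint a b c q = ((q.1 : ℝ) / 2) • (b - a) + ((q.2 : ℝ) / 2) • (c - a) := by
  simp only [halfEdgeLatticePoint, ← Int.cast_smul_eq_zsmul ℝ, smul_smul, div_eq_mul_inv]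

theorem AffineBasis.halfEdgeLatticePoint_injective (hB : ⇑B = ![a, b, c]) :
    Function.Injective (halfEdgeLatticePoint a b c) := by
  intro q q' h
  have h₁ := (B.coord_sub_smul_add_smul hB 0 (q.1 / 2) (q.2 / 2)).2
  have h₂ := (B.coord_sub_smul_add_smul hB 0 (q'.1 / 2) (q'.2 / 2)).2
  rw [halfEdgeLatticePoint_eq, halfEdgeLatticePoint_eq] at h
  rw [h] at h₁
  exact Prod.ext (by exact_mod_cast (by linarith : (q.1 : ℝ) = q'.1))
    (by exact_mod_cast (by linarith : (q.2 : ℝ) = q'.2))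

theorem AffineBasis.sub_halfEdgeLatticePoint_mem_convexHull_iff (hB : ⇑B = ![a, b, c]) (p : E)
    (q : ℤ × ℤ) :
    p - halfEdgeLatticePoint a b c q ∈ convexHull ℝ {a, b, c} ↔
      q ∈ latticeTriangle (2 * B.coord 1 p) (2 * B.coord 2 p) := by
  obtain ⟨h0, h1, h2⟩ := B.coord_sub_smul_add_smul hB p (q.1 / 2) (q.2 / 2)
  simp only [halfEdgeLatticePoint_eq, ← B.range_eq_of_coe_eq hB, B.convexHull_eq_nonneg_coord,
    mem_ofPred_eq, Fin.forall_fin_succ, IsEmpty.forall_iff, and_true, Fin.succ_zero_eq_one,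
    Fin.succ_one_eq_two, h0, h1, h2, latticeTriangle]
  constructor <;> rintro ⟨_, _, _⟩ <;> refine ⟨?_, ?_, ?_⟩ <;> linarith

theorem AffineBasis.sub_halfEdgeLatticePoint_mem_interior_convexHull_iff (hB : ⇑B = ![a, b, c])
    (p : E) (q : ℤ × ℤ) :
    p - halfEdgeLatticePoint a b c q ∈ interior (convexHull ℝ {a, b, c}) ↔
      (q.1 : ℝ) < 2 * B.coord 1 p ∧ (q.2 : ℝ) < 2 * B.coord 2 p ∧
        2 * B.coord 1 p + 2 * B.coord 2 p - 2 < q.1 + q.2 := by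
  obtain ⟨h0, h1, h2⟩ := B.coord_sub_smul_add_smul hB p (q.1 / 2) (q.2 / 2)
  simp only [halfEdgeLatticePoint_eq, ← B.range_eq_of_coe_eq hB, B.interior_convexHull,
    mem_ofPred_eq, Fin.forall_fin_succ, IsEmpty.forall_iff, and_true, Fin.succ_zero_eq_one,
    Fin.succ_one_eq_two, h0, h1, h2]
  constructor <;> rintro ⟨_, _, _⟩ <;> refine ⟨?_, ?_, ?_⟩ <;> linarith

end HalfEdgeLattice

theorem triangle_lattice_odd_cover (a b c : ℝ × ℝ)
    (hnd : ¬ Collinear ℝ ({a, b, c} : Set (ℝ × ℝ)))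
    (T : Set (ℝ × ℝ)) (hT : T = convexHull ℝ ({a, b, c} : Set (ℝ × ℝ)))
    (Λ : Set (ℝ × ℝ))
    (hΛ : Λ = {z | ∃ m n : ℤ, z = m • ((2 : ℝ)⁻¹ • (b - a)) + n • ((2 : ℝ)⁻¹ • (c - a))})
    (p : ℝ × ℝ) (hp : ∀ z ∈ Λ, p - z ∉ frontier T) :
    Set.ncard {z | z ∈ Λ ∧ p - z ∈ T} = 1 ∨ Set.ncard {z | z ∈ Λ ∧ p - z ∈ T} = 3 := by
  obtain ⟨B, hB⟩ := exists_affineBasis_of_not_collinear (by simp) hnd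
  have hΛ' : Λ = range (halfEdgeLatticePoint a b c) := by
    ext z
    simp [hΛ, halfEdgeLatticePoint, eq_comm]
  have hmem := B.sub_halfEdgeLatticePoint_mem_convexHull_iff hB p
  have hset : {z | z ∈ Λ ∧ p - z ∈ T} =
      halfEdgeLatticePoint a b c '' latticeTriangle (2 * B.coord 1 p) (2 * B.coord 2 p) := by
    ext z
    rw [hΛ', hT]
    constructor
    · rintro ⟨⟨q, rfl⟩, hz⟩
      exact ⟨q, (hmem q).1 hz, rfl⟩
    · rintro ⟨q, hq, rfl⟩
      exact ⟨⟨q, rfl⟩, (hmem q).2 hq⟩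
  rw [hset, ncard_image_of_injective _ (B.halfEdgeLatticePoint_injective hB)]
  refine latticeTriangle.ncard_eq_one_or_three fun q hq => ?_
  have hfr := hp _ (hΛ' ▸ mem_range_self q)
  rwa [hT, ← mem_interior_iff_notMem_frontier ((hmem q).2 hq),
    B.sub_halfEdgeLatticePoint_mem_interior_convexHull_iff hB] at hfr
end

section
/- Let T be a non-degenerate triangle in ℝ². Then the odd compression ratio of T is at least ½: for every finite odd-cardinality set Z ⊆ ℝ², the Lebesgue measure of the set of points lying in an odd number of the translates T+z, z ∈ Z, is at least half the area of T. -/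
/-!
An affine change of variables turns the triangle into `conv {0, (2, 0), (0, 2)}`, which agrees
up to a null set with the half-open triangle `H = {x ≥ 0, y ≥ 0, x + y < 2}` of area at most `2`.
Every coset `w + ℤ²` meets `H` in one or three points. Double counting the pairs `(z, l)` with
`z ∈ Z`, `l ∈ ℤ²` and `q + l - z ∈ H` therefore gives an odd total, so for every `q` some
`q + l` lies in an odd number of the translates `z + H`. The oddly covered set thus meets every
coset of `ℤ²`, and its measure is at least that of the fundamental domain `[0, 1)²`.
-/

open scoped Classical Pointwise
open MeasureTheory Set Finset

section OddlyCovered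

variable {G : Type*}

def oddlyCovered [AddGroup G] (S : Set G) (Z : Finset G) : Set G :=
  {p | Odd (Z.filter fun z => p - z ∈ S).card}

theorem oddlyCovered_vadd [AddGroup G] (a : G) (S : Set G) (Z : Finset G) :
    oddlyCovered (a +ᵥ S) Z = a +ᵥ oddlyCovered S Z := by
  ext p
  simp only [oddlyCovered, mem_vadd_set_iff_neg_vadd_mem, Set.mem_ofPred_eq, vadd_eq_add,
    add_sub_assoc]

theorem oddlyCovered_image_addEquiv [AddGroup G] {H : Type*} [AddGroup H] (e : G ≃+ H)
    (S : Set G) (Z : Finset H) :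
    oddlyCovered (e '' S) Z = e '' oddlyCovered S (Z.map e.symm.toEquiv.toEmbedding) := by
  ext q
  simp only [oddlyCovered, image_eq_preimage_of_inverse e.symm_apply_apply e.apply_symm_apply,
    Set.mem_preimage, Set.mem_ofPred_eq, filter_map, card_map, Function.comp_def, map_sub]
  rfl

theorem measurableSet_oddlyCovered [AddGroup G] [MeasurableSpace G] [MeasurableSub G]
    {S : Set G} (hS : MeasurableSet S) (Z : Finset G) : MeasurableSet (oddlyCovered S Z) := by
  have hcard : Measurable fun p : G => (Z.filter fun z => p - z ∈ S).card := by
    simp_rw [Finset.card_filter]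
    exact Finset.measurable_sum _ fun z _ =>
      Measurable.ite (measurable_sub_const z hS) measurable_const measurable_const
  exact hcard (MeasurableSet.of_discrete (s := {n : ℕ | Odd n}))

theorem oddlyCovered_ae_eq [AddGroup G] [MeasurableSpace G] [MeasurableAdd G] {μ : Measure G}
    [μ.IsAddRightInvariant] {S S' : Set G} (h : S =ᵐ[μ] S') (Z : Finset G) :
    oddlyCovered S Z =ᵐ[μ] oddlyCovered S' Z := by
  have hz : ∀ z ∈ Z, ∀ᵐ p ∂μ, (p - z ∈ S ↔ p - z ∈ S') := fun z _ =>
    (measurePreserving_sub_right μ z).quasiMeasurePreserving.ae (Filter.eventuallyEq_set.mp h)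
  refine Filter.eventuallyEq_set.mpr ?_
  filter_upwards [(Filter.eventually_all_finset Z).mpr hz] with p hp
  simp only [oddlyCovered, Set.mem_ofPred_eq, filter_congr hp]

theorem Finset.exists_odd_card_filter_mem {α β : Type*} [DecidableEq β] (Z : Finset α)
    (F : α → Finset β) (hZ : Odd #Z) (hF : ∀ z ∈ Z, Odd #(F z)) :
    ∃ b, Odd #{z ∈ Z | b ∈ F z} := by
  have hsum : Odd (∑ z ∈ Z, #(F z)) := by
    rwa [odd_sum_iff_odd_card_odd, filter_true_of_mem hF]
  have hdouble : ∑ z ∈ Z, #(F z) = ∑ b ∈ Z.biUnion F, #{z ∈ Z | b ∈ F z} :=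
    calc ∑ z ∈ Z, #(F z) = ∑ z ∈ Z, #((Z.biUnion F).bipartiteAbove (fun z b => b ∈ F z) z) := by
          refine sum_congr rfl fun z hz => ?_
          rw [bipartiteAbove, filter_mem_eq_inter, inter_eq_right.mpr (subset_biUnion_of_mem F hz)]
      _ = _ := sum_card_bipartiteAbove_eq_sum_card_bipartiteBelow _
  rw [hdouble, odd_sum_iff_odd_card_odd] at hsum
  obtain ⟨b, hb⟩ := card_pos.mp hsum.pos
  exact ⟨b, (mem_filter.mp hb).2⟩

theorem exists_add_mem_oddlyCovered [AddCommGroup G] {ι : Type*} {S : Set G} (v : ι → G)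
    (F : G → Finset ι) (hF : ∀ w i, i ∈ F w ↔ w + v i ∈ S) (hodd : ∀ w, Odd #(F w))
    {Z : Finset G} (hZ : Odd #Z) (q : G) :
    ∃ i, q + v i ∈ oddlyCovered S Z := by
  obtain ⟨i, hi⟩ := Z.exists_odd_card_filter_mem (fun z => F (q - z)) hZ fun z _ => hodd _
  refine ⟨i, ?_⟩
  simpa [oddlyCovered, hF, sub_add_eq_add_sub] using hi

theorem measure_le_of_forall_exists_add_mem [AddGroup G] [MeasurableSpace G] [MeasurableAdd G]
    [MeasurableSub G] (μ : Measure G) [μ.IsAddRightInvariant] {ι : Type*} [Countable ι]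
    (v : ι → G) {D O : Set G} (hD : MeasurableSet D) (hO : MeasurableSet O)
    (hdisj : ∀ i j, ∀ x ∈ D, ∀ y ∈ D, x + v i = y + v j → i = j)
    (hcov : ∀ x ∈ D, ∃ i, x + v i ∈ O) : μ D ≤ μ O := by
  set A : ι → Set G := fun i => O ∩ (· - v i) ⁻¹' D
  have hA : ∀ i, MeasurableSet (A i) := fun i => hO.inter (measurable_sub_const _ hD)
  have hAdisj : Pairwise (Function.onFun Disjoint A) := by
    intro i j hij
    refine Set.disjoint_left.mpr fun y hi hj => hij (hdisj i j _ hi.2 _ hj.2 ?_)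
    simp
  have hcover : D ⊆ ⋃ i, (· + v i) ⁻¹' A i := fun x hx => by
    obtain ⟨i, hi⟩ := hcov x hx
    exact mem_iUnion.mpr ⟨i, hi, by simpa using hx⟩
  calc μ D ≤ μ (⋃ i, (· + v i) ⁻¹' A i) := measure_mono hcover
    _ ≤ ∑' i, μ ((· + v i) ⁻¹' A i) := measure_iUnion_le _
    _ = μ (⋃ i, A i) := by
      simp_rw [measure_preimage_add_right]
      exact (measure_iUnion hAdisj hA).symm
    _ ≤ μ O := measure_mono (iUnion_subset fun i => inter_subset_left)

end OddlyCovered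

def latticePoint (l : ℤ × ℤ) : ℝ × ℝ := (l.1, l.2)

/-- The hypotenuse is left out so that every coset of `ℤ²` meets this triangle in an odd number
of points; closed, it would contain six points of `ℤ²`. -/
def halfOpenTriangle : Set (ℝ × ℝ) := {p | 0 ≤ p.1 ∧ 0 ≤ p.2 ∧ p.1 + p.2 < 2}

theorem measurableSet_halfOpenTriangle : MeasurableSet halfOpenTriangle :=
  (measurableSet_le measurable_const measurable_fst).inter
    ((measurableSet_le measurable_const measurable_snd).inter
      (measurableSet_lt (measurable_fst.add measurable_snd) measurable_const))

-- `w + l ∈ halfOpenTriangle` iff `l.1 ≥ -⌊w.1⌋`, `l.2 ≥ -⌊w.2⌋` and `l.1 + l.2 ≤ 1 - ⌊w.1 + w.2⌋`,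
-- where `⌊w.1 + w.2⌋ - ⌊w.1⌋ - ⌊w.2⌋ ∈ {0, 1}`.
noncomputable def latticeHits (w : ℝ × ℝ) : Finset (ℤ × ℤ) :=
  if ⌊w.1 + w.2⌋ = ⌊w.1⌋ + ⌊w.2⌋ + 1 then {(-⌊w.1⌋, -⌊w.2⌋)}
  else {(-⌊w.1⌋, -⌊w.2⌋), (1 - ⌊w.1⌋, -⌊w.2⌋), (-⌊w.1⌋, 1 - ⌊w.2⌋)}

theorem odd_card_latticeHits (w : ℝ × ℝ) : Odd #(latticeHits w) := by
  unfold latticeHits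
  split_ifs
  · simp
  · have hnew : (-⌊w.1⌋, -⌊w.2⌋) ∉ ({(1 - ⌊w.1⌋, -⌊w.2⌋), (-⌊w.1⌋, 1 - ⌊w.2⌋)} : Finset _) := by
      simp only [Finset.mem_insert, Finset.mem_singleton, Prod.mk.injEq, not_or]
      omega
    rw [card_insert_of_notMem hnew, card_pair (by simp)]
    decide

theorem mem_latticeHits_iff (w : ℝ × ℝ) (l : ℤ × ℤ) :
    l ∈ latticeHits w ↔ w + latticePoint l ∈ halfOpenTriangle := by
  obtain ⟨i, j⟩ := l
  have h1 : 0 ≤ w.1 + i ↔ -i ≤ ⌊w.1⌋ := by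
    rw [Int.le_floor]; push_cast; constructor <;> intro <;> linarith
  have h2 : 0 ≤ w.2 + j ↔ -j ≤ ⌊w.2⌋ := by
    rw [Int.le_floor]; push_cast; constructor <;> intro <;> linarith
  have h3 : w.1 + i + (w.2 + j) < 2 ↔ ⌊w.1 + w.2⌋ < 2 - i - j := by
    rw [Int.floor_lt]; push_cast; constructor <;> intro <;> linarith
  have hlo := Int.le_floor_add w.1 w.2
  have hhi := Int.le_floor_add_floor w.1 w.2
  simp only [halfOpenTriangle, latticePoint, Set.mem_ofPred_eq, Prod.fst_add, Prod.snd_add, h1, h2,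
    h3]
  unfold latticeHits
  split_ifs <;> simp only [Finset.mem_insert, Finset.mem_singleton, Prod.ext_iff] <;> omega

theorem eq_of_add_latticePoint_eq {x y : ℝ × ℝ} (hx : x ∈ Ico (0 : ℝ) 1 ×ˢ Ico (0 : ℝ) 1)
    (hy : y ∈ Ico (0 : ℝ) 1 ×ˢ Ico (0 : ℝ) 1) {l l' : ℤ × ℤ}
    (h : x + latticePoint l = y + latticePoint l') : l = l' := by
  have hfloor := congrArg (fun p : ℝ × ℝ => (⌊p.1⌋, ⌊p.2⌋)) h
  simpa [latticePoint, Int.floor_add_intCast, Int.floor_eq_zero_iff.mpr, hx.1, hx.2, hy.1, hy.2]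
    using hfloor

theorem one_le_volume_oddlyCovered_halfOpenTriangle {Z : Finset (ℝ × ℝ)} (hZ : Odd #Z) :
    1 ≤ volume (oddlyCovered halfOpenTriangle Z) := by
  have hsquare : volume (Ico (0 : ℝ) 1 ×ˢ Ico (0 : ℝ) 1) = 1 := by
    simp [Measure.volume_eq_prod, Measure.prod_prod]
  rw [← hsquare]
  exact measure_le_of_forall_exists_add_mem volume latticePoint
    (measurableSet_Ico.prod measurableSet_Ico)
    (measurableSet_oddlyCovered measurableSet_halfOpenTriangle Z)
    (fun _ _ _ hx _ hy => eq_of_add_latticePoint_eq hx hy)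
    (fun x _ => exists_add_mem_oddlyCovered latticePoint latticeHits mem_latticeHits_iff
      odd_card_latticeHits hZ x)

theorem volume_setOf_add_eq (r : ℝ) : volume {p : ℝ × ℝ | p.1 + p.2 = r} = 0 := by
  have hm : MeasurableSet {p : ℝ × ℝ | p.1 + p.2 = r} :=
    measurableSet_eq_fun (measurable_fst.add measurable_snd) measurable_const
  have hslice (x : ℝ) : Prod.mk x ⁻¹' {p : ℝ × ℝ | p.1 + p.2 = r} = {r - x} := by
    ext y; simp [eq_sub_iff_add_eq']
  simp [Measure.volume_eq_prod, Measure.prod_apply hm, hslice]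

theorem convexHull_triangle :
    convexHull ℝ {0, (2, 0), (0, 2)} = {p : ℝ × ℝ | 0 ≤ p.1 ∧ 0 ≤ p.2 ∧ p.1 + p.2 ≤ 2} := by
  refine Subset.antisymm (convexHull_min ?_ ?_) fun p ⟨h1, h2, h3⟩ => ?_
  · rintro p (rfl | rfl | rfl) <;> norm_num
  · rintro x ⟨x1, x2, x3⟩ y ⟨y1, y2, y3⟩ s t hs ht hst
    refine ⟨?_, ?_, ?_⟩ <;>
      simp only [Prod.fst_add, Prod.snd_add, Prod.smul_fst, Prod.smul_snd, smul_eq_mul] <;>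
      nlinarith
  · have hmem := (convex_convexHull ℝ ({0, (2, 0), (0, 2)} : Set (ℝ × ℝ))).sum_mem
      (t := Finset.univ) (w := ![1 - (p.1 + p.2) / 2, p.1 / 2, p.2 / 2])
      (z := ![0, (2, 0), (0, 2)])
      (by
        intro i _
        fin_cases i <;>
          simp only [Fin.isValue, Fin.reduceFinMk, Matrix.cons_val_zero, Matrix.cons_val_one,
            Matrix.cons_val] <;>
          linarith)
      (by simp only [Fin.sum_univ_three, Fin.isValue, Matrix.cons_val_zero, Matrix.cons_val_one,
        Matrix.cons_val]; ring)
      (by intro i _; fin_cases i <;> apply subset_convexHull <;> simp)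
    convert hmem
    ext <;> simp [Fin.sum_univ_three]

theorem convexHull_triangle_ae_eq :
    convexHull ℝ {0, (2, 0), (0, 2)} =ᵐ[volume] halfOpenTriangle := by
  rw [convexHull_triangle, ae_eq_set]
  constructor
  · refine measure_mono_null (fun p ⟨⟨h1, h2, h3⟩, hp⟩ => ?_) (volume_setOf_add_eq 2)
    exact le_antisymm h3 (not_lt.mp fun h => hp ⟨h1, h2, h⟩)
  · exact measure_mono_null (fun p ⟨⟨h1, h2, h3⟩, hp⟩ => hp ⟨h1, h2, h3.le⟩) measure_empty

theorem volume_halfOpenTriangle_le : volume halfOpenTriangle ≤ 2 := by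
  set R : Set (ℝ × ℝ) := ((2 : ℝ), (2 : ℝ)) +ᵥ -halfOpenTriangle
  have hR : R = {p : ℝ × ℝ | p.1 ≤ 2 ∧ p.2 ≤ 2 ∧ 2 < p.1 + p.2} := by
    ext p
    simp only [R, mem_vadd_set_iff_neg_vadd_mem, Set.mem_neg, halfOpenTriangle, Set.mem_ofPred_eq,
      vadd_eq_add, Prod.fst_neg, Prod.snd_neg, Prod.fst_add, Prod.snd_add]
    constructor <;> rintro ⟨h1, h2, h3⟩ <;> refine ⟨?_, ?_, ?_⟩ <;> linarith
  have hdisj : Disjoint halfOpenTriangle R := by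
    rw [hR]
    exact Set.disjoint_left.mpr fun p ⟨_, _, h⟩ ⟨_, _, h'⟩ => (h.trans h').false
  have hsub : halfOpenTriangle ∪ R ⊆ Icc (0 : ℝ) 2 ×ˢ Icc (0 : ℝ) 2 := by
    rw [hR]
    rintro p (⟨h1, h2, h3⟩ | ⟨h1, h2, h3⟩) <;>
      exact ⟨⟨by linarith, by linarith⟩, by linarith, by linarith⟩
  have hsum : 2 * volume halfOpenTriangle ≤ 2 * 2 := calc
    2 * volume halfOpenTriangle = volume (halfOpenTriangle ∪ R) := by
      rw [measure_union hdisj (measurableSet_halfOpenTriangle.neg.const_vadd _), measure_vadd,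
        Measure.measure_neg, two_mul]
    _ ≤ volume (Icc (0 : ℝ) 2 ×ˢ Icc (0 : ℝ) 2) := measure_mono hsub
    _ = 2 * 2 := by
      rw [Measure.volume_eq_prod, Measure.prod_prod, Real.volume_Icc]
      norm_num
  exact (ENNReal.mul_le_mul_iff_right two_ne_zero ENNReal.ofNat_ne_top).mp hsum

theorem convexHull_eq_vadd_image (a b c : ℝ × ℝ) (L : ℝ × ℝ →ₗ[ℝ] ℝ × ℝ)
    (hb : L (2, 0) = b - a) (hc : L (0, 2) = c - a) :
    convexHull ℝ {a, b, c} = a +ᵥ L '' convexHull ℝ {0, (2, 0), (0, 2)} := by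
  rw [LinearMap.image_convexHull, ← convexHull_vadd]
  simp [image_insert_eq, hb, hc, vadd_set_insert]

theorem triangle_odd_compression_half_general (a b c : ℝ × ℝ)
    (Z : Finset (ℝ × ℝ)) (hZ : Odd Z.card) :
    volume (convexHull ℝ ({a, b, c} : Set (ℝ × ℝ))) / 2 ≤
      volume {p : ℝ × ℝ |
        Odd ((Z.filter (fun z => p - z ∈ convexHull ℝ ({a, b, c} : Set (ℝ × ℝ)))).card)} := by
  set L : ℝ × ℝ →ₗ[ℝ] ℝ × ℝ := (2 : ℝ)⁻¹ •
    ((LinearMap.fst ℝ ℝ ℝ).smulRight (b - a) + (LinearMap.snd ℝ ℝ ℝ).smulRight (c - a))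
  rw [convexHull_eq_vadd_image a b c L (by simp [L]) (by simp [L])]
  change _ ≤ volume (oddlyCovered _ Z)
  rw [oddlyCovered_vadd, measure_vadd, measure_vadd, Measure.addHaar_image_linearMap]
  by_cases hL : LinearMap.det L = 0
  · simp [hL]
  set Z' := Z.map (L.equivOfDetNeZero hL).symm.toEquiv.toEmbedding
  have himage : oddlyCovered (L '' convexHull ℝ {0, (2, 0), (0, 2)}) Z =
      L '' oddlyCovered (convexHull ℝ {0, (2, 0), (0, 2)}) Z' :=
    oddlyCovered_image_addEquiv (L.equivOfDetNeZero hL).toAddEquiv _ Z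
  have hT : volume (convexHull ℝ {0, (2, 0), (0, 2)} : Set (ℝ × ℝ)) / 2 ≤ 1 := by
    rw [measure_congr convexHull_triangle_ae_eq]
    exact ENNReal.div_le_of_le_mul (by simpa using volume_halfOpenTriangle_le)
  have hO : 1 ≤ volume (oddlyCovered (convexHull ℝ {0, (2, 0), (0, 2)}) Z') := by
    rw [measure_congr (oddlyCovered_ae_eq convexHull_triangle_ae_eq Z')]
    exact one_le_volume_oddlyCovered_halfOpenTriangle (by rwa [card_map])
  rw [himage, Measure.addHaar_image_linearMap, mul_div_assoc]
  gcongr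
  exact hT.trans hO

theorem triangle_odd_compression_half (a b c : ℝ × ℝ)
    (hnd : ¬ Collinear ℝ ({a, b, c} : Set (ℝ × ℝ)))
    (Z : Finset (ℝ × ℝ)) (hZ : Odd Z.card) :
    volume (convexHull ℝ ({a, b, c} : Set (ℝ × ℝ))) / 2 ≤
      volume {p : ℝ × ℝ |
        Odd ((Z.filter (fun z => p - z ∈ convexHull ℝ ({a, b, c} : Set (ℝ × ℝ)))).card)} :=
  triangle_odd_compression_half_general a b c Z hZ
end
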